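/- Let p, q ∈ ℝ², r ≥ 0, with guide complements g⁺, g⁻. Then [L(p,g⁺;r) ∪ L(q,g⁻;r)] ∩ [L(p,g⁻;r) ∪ L(q,g⁺;r)] = L(p,q;r) ∪ L(g⁺,g⁻;r). -/
import Mathlib


noncomputable def taxi (a b : ℝ × ℝ) : ℝ := |a.1 - b.1| + |a.2 - b.2|

noncomputable def gplus (p q : ℝ × ℝ) : ℝ × ℝ :=
  ((p.1 - p.2 + q.1 + q.2) / 2, (q.1 + q.2 - p.1 + p.2) / 2)

noncomputable def gminus (p q : ℝ × ℝ) : ℝ × ℝ :=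
  ((p.1 + p.2 + q.1 - q.2) / 2, (p.1 + p.2 - q.1 + q.2) / 2)

def Lset (a b : ℝ × ℝ) (r : ℝ) : Set (ℝ × ℝ) := {x | taxi x a * taxi x b < r ^ 2}

def Kset (a b : ℝ × ℝ) (r : ℝ) : Set (ℝ × ℝ) := {x | taxi x a * taxi x b = r ^ 2}

lemma abs_add_abs_eq_max (s t : ℝ) : |s| + |t| = max |s + t| |s - t| := by
  rcases abs_cases s with ⟨h1, h1'⟩ | ⟨h1, h1'⟩ <;>
  rcases abs_cases t with ⟨h2, h2'⟩ | ⟨h2, h2'⟩ <;>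
  rcases abs_cases (s + t) with ⟨h3, h3'⟩ | ⟨h3, h3'⟩ <;>
  rcases abs_cases (s - t) with ⟨h4, h4'⟩ | ⟨h4, h4'⟩ <;>
  rcases le_total |s + t| |s - t| with h | h <;>
  simp only [max_eq_left, max_eq_right, h] <;> linarith

lemma taxi_eq_max (x a : ℝ × ℝ) :
    taxi x a = max |(x.1 + x.2) - (a.1 + a.2)| |(x.1 - x.2) - (a.1 - a.2)| := by
  have h := abs_add_abs_eq_max (x.1 - a.1) (x.2 - a.2)
  unfold taxi
  rw [h]
  congr 1 <;> congr 1 <;> ring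

lemma key (a b c d s : ℝ) (ha : 0 ≤ a) (hb : 0 ≤ b) (hc : 0 ≤ c) (hd : 0 ≤ d) :
    ((max a b * max c b < s ∨ max c d * max a d < s) ∧
      (max a b * max a d < s ∨ max c d * max c b < s)) ↔
      (max a b * max c d < s ∨ max c b * max a d < s) := by
  have hA : (0:ℝ) ≤ max a b := le_trans ha (le_max_left a b)
  have hB : (0:ℝ) ≤ max c d := le_trans hc (le_max_left c d)
  have hC : (0:ℝ) ≤ max c b := le_trans hb (le_max_right c b)
  have hD : (0:ℝ) ≤ max a d := le_trans ha (le_max_left a d)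
  have hL1 : min (max a b * max c b) (max c d * max a d) ≤
      min (max a b * max c d) (max c b * max a d) := by
    rcases le_total b d with h | h
    · have h1 : max c b ≤ max c d := max_le_max le_rfl h
      have h2 : max a b ≤ max a d := max_le_max le_rfl h
      refine le_min ?_ ?_
      · exact le_trans (min_le_left _ _) (mul_le_mul_of_nonneg_left h1 hA)
      · calc min (max a b * max c b) (max c d * max a d) ≤ max a b * max c b :=
              min_le_left _ _
          _ = max c b * max a b := mul_comm _ _
          _ ≤ max c b * max a d := mul_le_mul_of_nonneg_left h2 hC
    · have h1 : max a d ≤ max a b := max_le_max le_rfl h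
      have h2 : max c d ≤ max c b := max_le_max le_rfl h
      refine le_min ?_ ?_
      · calc min (max a b * max c b) (max c d * max a d) ≤ max c d * max a d :=
              min_le_right _ _
          _ ≤ max c d * max a b := mul_le_mul_of_nonneg_left h1 hB
          _ = max a b * max c d := mul_comm _ _
      · calc min (max a b * max c b) (max c d * max a d) ≤ max c d * max a d :=
              min_le_right _ _
          _ ≤ max c b * max a d := mul_le_mul_of_nonneg_right h2 hD
  have hL2 : min (max a b * max a d) (max c d * max c b) ≤
      min (max a b * max c d) (max c b * max a d) := by
    rcases le_total a c with h | h
    · have h1 : max a b ≤ max c b := max_le_max h le_rfl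
      have h2 : max a d ≤ max c d := max_le_max h le_rfl
      refine le_min ?_ ?_
      · exact le_trans (min_le_left _ _) (mul_le_mul_of_nonneg_left h2 hA)
      · exact le_trans (min_le_left _ _) (mul_le_mul_of_nonneg_right h1 hD)
    · have h1 : max c b ≤ max a b := max_le_max h le_rfl
      have h2 : max c d ≤ max a d := max_le_max h le_rfl
      refine le_min ?_ ?_
      · calc min (max a b * max a d) (max c d * max c b) ≤ max c d * max c b :=
              min_le_right _ _
          _ ≤ max c d * max a b := mul_le_mul_of_nonneg_left h1 hB
          _ = max a b * max c d := mul_comm _ _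
      · calc min (max a b * max a d) (max c d * max c b) ≤ max c d * max c b :=
              min_le_right _ _
          _ = max c b * max c d := mul_comm _ _
          _ ≤ max c b * max a d := mul_le_mul_of_nonneg_left h2 hC
  have hL3 : min (max a b * max c d) (max c b * max a d) ≤
      max (min (max a b * max c b) (max c d * max a d))
        (min (max a b * max a d) (max c d * max c b)) := by
    rcases le_total a b with hab | hab <;> rcases le_total c d with hcd | hcd
    · rcases le_total b d with h | h
      · have hE : max c d = max a d := by rw [max_eq_right hcd, max_eq_right (hab.trans h)]
        refine le_max_of_le_right (le_of_eq ?_)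
        rw [hE]; congr 1; ring
      · have hE : max a b = max c b := by rw [max_eq_right hab, max_eq_right (hcd.trans h)]
        refine le_max_of_le_right (le_of_eq ?_)
        rw [hE, min_comm]; congr 1; ring
    · rcases le_total b c with h | h
      · have hE : max c d = max c b := by rw [max_eq_left hcd, max_eq_left h]
        refine le_max_of_le_left (le_of_eq ?_)
        rw [hE]
      · have hE : max a b = max c b := by rw [max_eq_right hab, max_eq_right h]
        refine le_max_of_le_right (le_of_eq ?_)
        rw [hE, min_comm]; congr 1; ring
    · rcases le_total a d with h | h
      · have hE : max c d = max a d := by rw [max_eq_right hcd, max_eq_right h]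
        refine le_max_of_le_right (le_of_eq ?_)
        rw [hE]; congr 1; ring
      · have hE : max a b = max a d := by rw [max_eq_left hab, max_eq_left h]
        refine le_max_of_le_left (le_of_eq ?_)
        rw [← hE, min_comm]; congr 1 <;> ring
    · rcases le_total a c with h | h
      · have hE : max c d = max c b := by rw [max_eq_left hcd, max_eq_left (h.trans' hab)]
        refine le_max_of_le_left (le_of_eq ?_)
        rw [hE]
      · have hE : max a b = max a d := by rw [max_eq_left hab, max_eq_left (h.trans' hcd)]
        refine le_max_of_le_left (le_of_eq ?_)
        rw [← hE, min_comm]; congr 1 <;> ring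
  constructor
  · rintro ⟨h12, h34⟩
    rw [← min_lt_iff] at h12 h34 ⊢
    exact lt_of_le_of_lt hL3 (max_lt h12 h34)
  · intro h
    rw [← min_lt_iff] at h
    constructor
    · rw [← min_lt_iff]; exact lt_of_le_of_lt hL1 h
    · rw [← min_lt_iff]; exact lt_of_le_of_lt hL2 h

lemma taxi_gplus (x p q : ℝ × ℝ) :
    taxi x (gplus p q) =
      max |(x.1 + x.2) - (q.1 + q.2)| |(x.1 - x.2) - (p.1 - p.2)| := by
  rw [taxi_eq_max]
  congr 1 <;> congr 1 <;> simp [gplus] <;> ring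

lemma taxi_gminus (x p q : ℝ × ℝ) :
    taxi x (gminus p q) =
      max |(x.1 + x.2) - (p.1 + p.2)| |(x.1 - x.2) - (q.1 - q.2)| := by
  rw [taxi_eq_max]
  congr 1 <;> congr 1 <;> simp [gminus] <;> ring

theorem mixed_inter_union_eq (p q : ℝ × ℝ) (r : ℝ) (hr : 0 ≤ r) :
    (Lset p (gplus p q) r ∪ Lset q (gminus p q) r) ∩
      (Lset p (gminus p q) r ∪ Lset q (gplus p q) r) =
      Lset p q r ∪ Lset (gplus p q) (gminus p q) r := by
  ext x
  simp only [Lset, Set.mem_inter_iff, Set.mem_union, Set.mem_setOf_eq]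
  rw [taxi_eq_max x p, taxi_eq_max x q, taxi_gplus x p q, taxi_gminus x p q]
  exact key _ _ _ _ _ (abs_nonneg _) (abs_nonneg _) (abs_nonneg _) (abs_nonneg _)
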